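/- Fix a graph G, an integer k ≥ 1, a partial colour function c : S → {1,…,k} with S ⊆ V(G), and a nice tree decomposition (T, 𝒳) of G. Let t be an introduce node with child t̄ and introduced vertex ṽ, and let τ = [t, c', ℋ] be a valid tuple with ℋ = {(H_i, U_i)}_{i=1}^k and c'(ṽ) = i. Then: (1) if ṽ ∈ H_i and some neighbour n of ṽ in G_t has c'(n) ≠ i, then Π(τ) = −∞; (2) if for some j ≠ i some vertex of H_j is a neighbour of ṽ in G_t, then Π(τ) = −∞; (3) otherwise, letting τ̄ = [t̄, c̄', ℋ̄] where c̄' is the restriction of c' to X_{t̄} and ℋ̄ is obtained from ℋ by removing ṽ from H_i and from U_i, one has Π(τ) = 1 + Π(τ̄) if ṽ ∈ H_i and Π(τ) = Π(τ̄) if ṽ ∈ U_i (with the convention 1 + (−∞) = −∞). -/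

import Mathlib

open SimpleGraph

/-- A tree decomposition of a graph `G` over a tree `TG`. -/
structure TreeDecomp {V T : Type*} (G : SimpleGraph V) (TG : SimpleGraph T) where
  isTree : TG.IsTree
  bag : T → Set V
  bags_cover : ∀ v : V, ∃ t : T, v ∈ bag t
  bags_cover_edges : ∀ ⦃u v : V⦄, G.Adj u v → ∃ t : T, u ∈ bag t ∧ v ∈ bag t
  bags_connected : ∀ v : V, (TG.induce {t : T | v ∈ bag t}).Connected

/-- The width of a tree decomposition: the maximum bag size minus one. -/
noncomputable def TreeDecomp.width {V T : Type*} [Fintype T] {G : SimpleGraph V}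
    {TG : SimpleGraph T} (D : TreeDecomp G TG) : ℕ :=
  (Finset.univ.sup fun t : T => (D.bag t).ncard) - 1

/-- In the tree `TG` rooted at `r`, node `t'` is a descendant of `t`
(with `t` counted as its own descendant): every walk from the root `r`
to `t'` passes through `t`. -/
def TreeDesc {T : Type*} (TG : SimpleGraph T) (r t t' : T) : Prop :=
  ∀ p : TG.Walk r t', t ∈ p.support

/-- `t'` is a child of `t` in the tree `TG` rooted at `r`. -/
def TreeChild {T : Type*} (TG : SimpleGraph T) (r t t' : T) : Prop :=
  TG.Adj t t' ∧ TreeDesc TG r t t'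

/-- A leaf node of the rooted tree: a node with no children. -/
def TreeLeafNode {T : Type*} (TG : SimpleGraph T) (r t : T) : Prop :=
  ∀ t', ¬ TreeChild TG r t t'

variable {V T : Type*} {G : SimpleGraph V} {TG : SimpleGraph T}

/-- `V(G_t)`: the vertices of the subgraph `G_t`, namely the union of the
bag of `t` with the bags of all descendants of `t`. -/
def TreeDecomp.VtSet (D : TreeDecomp G TG) (r t : T) : Set V :=
  D.bag t ∪ {v | ∃ t', TreeDesc TG r t t' ∧ v ∈ D.bag t'}

/-- `t` is an introduce node with (unique) child `tc`, introducing `v`. -/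
def TreeDecomp.IsIntroduceAt (D : TreeDecomp G TG) (r t tc : T) (v : V) : Prop :=
  TreeChild TG r t tc ∧ (∀ s, TreeChild TG r t s → s = tc) ∧
    v ∉ D.bag tc ∧ D.bag t = insert v (D.bag tc)

/-- `t` is a forget node with (unique) child `tc`, forgetting `v`. -/
def TreeDecomp.IsForgetAt (D : TreeDecomp G TG) (r t tc : T) (v : V) : Prop :=
  TreeChild TG r t tc ∧ (∀ s, TreeChild TG r t s → s = tc) ∧
    v ∈ D.bag tc ∧ D.bag t = D.bag tc \ {v}

/-- `t` is a join node with (exactly two) children `t₁` and `t₂`,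
whose bags coincide with the bag of `t`. -/
def TreeDecomp.IsJoinAt (D : TreeDecomp G TG) (r t t₁ t₂ : T) : Prop :=
  t₁ ≠ t₂ ∧ TreeChild TG r t t₁ ∧ TreeChild TG r t t₂ ∧
    (∀ s, TreeChild TG r t s → s = t₁ ∨ s = t₂) ∧
    D.bag t = D.bag t₁ ∧ D.bag t = D.bag t₂

/-- A nice tree decomposition rooted at `r`. -/
structure TreeDecomp.IsNice (D : TreeDecomp G TG) (r : T) : Prop where
  root_empty : D.bag r = ∅
  leaf_empty : ∀ t, TreeLeafNode TG r t → D.bag t = ∅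
  node_kinds : ∀ t, ¬ TreeLeafNode TG r t →
    (∃ tc v, D.IsIntroduceAt r t tc v) ∨ (∃ tc v, D.IsForgetAt r t tc v) ∨
      (∃ t₁ t₂, D.IsJoinAt r t t₁ t₂)

/-- A vertex is happy w.r.t. a total colouring if all of its neighbours share its colour. -/
def Happy {k : ℕ} (G : SimpleGraph V) (c : V → Fin k) (v : V) : Prop :=
  ∀ u : V, G.Adj v u → c u = c v

/-- A vertex is happy within the subgraph of `G` induced by `A`
(all of its neighbours inside `A` share its colour). -/
def HappyOn {k : ℕ} (G : SimpleGraph V) (A : Set V) (c : V → Fin k) (v : V) : Prop :=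
  ∀ u ∈ A, G.Adj v u → c u = c v

/-- `c'` extends the partial colouring `c` defined on `S`. -/
def ExtendsOn {k : ℕ} (S : Set V) (c c' : V → Fin k) : Prop :=
  ∀ v ∈ S, c' v = c v

/-- The number of happy vertices of `G` w.r.t. a total colouring. -/
noncomputable def happyCount {k : ℕ} (G : SimpleGraph V) (c : V → Fin k) : ℕ :=
  {v | Happy G c v}.ncard

/-- The treewidth of a (finite) graph: the minimum width of a tree decomposition. -/
noncomputable def treewidth {V : Type*} [Fintype V] (G : SimpleGraph V) : ℕ :=
  sInf {w : ℕ | ∃ (n : ℕ) (TG : SimpleGraph (Fin n)) (D : TreeDecomp G TG), D.width = w}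

/-- A dynamic-programming tuple `τ = [t, c', ℋ]`: a node, a colouring (meaningful on
the bag of the node) and a family `ℋ = (H_i, U_i)_i`. -/
structure MHVTuple (V T : Type*) (k : ℕ) where
  node : T
  col : V → Fin k
  H : Fin k → Set V
  U : Fin k → Set V

/-- A valid tuple: the bag colouring agrees with `c` on `S ∩ X_t`, and `ℋ` is a
partition family with `H_i ∪ U_i = c'⁻¹(i) ∩ X_t` and `H_i ∩ U_i = ∅`. -/
def TreeDecomp.ValidTuple (D : TreeDecomp G TG) {k : ℕ} (S : Set V) (c : V → Fin k)
    (τ : MHVTuple V T k) : Prop :=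
  (∀ v ∈ S ∩ D.bag τ.node, τ.col v = c v) ∧
    (∀ i, τ.H i ∪ τ.U i = {v ∈ D.bag τ.node | τ.col v = i}) ∧
    (∀ i, τ.H i ∩ τ.U i = ∅)

/-- A `τ`-good colouring: it extends the bag colouring `c'` of `τ`, agrees with the
initial partial colouring `c` on `S ∩ V(G_t)`, and makes every vertex of every `H_i`
happy in `G_t`. -/
def TreeDecomp.TauGood (D : TreeDecomp G TG) {k : ℕ} (r : T) (S : Set V) (c : V → Fin k)
    (τ : MHVTuple V T k) (cτ : V → Fin k) : Prop :=
  (∀ v ∈ D.bag τ.node, cτ v = τ.col v) ∧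
    (∀ v ∈ S ∩ D.VtSet r τ.node, cτ v = c v) ∧
    (∀ i, ∀ v ∈ τ.H i, HappyOn G (D.VtSet r τ.node) cτ v)

/-- `Π(τ)`: the maximum over all `τ`-good colourings of the number of vertices of
`V(G_t) \ ⋃ᵢ Uᵢ` that are happy in `G_t`; `−∞ = ⊥` if no `τ`-good colouring exists. -/
noncomputable def TreeDecomp.PiVal (D : TreeDecomp G TG) {k : ℕ} (r : T) (S : Set V)
    (c : V → Fin k) (τ : MHVTuple V T k) : EReal :=
  sSup {x : EReal | ∃ cτ : V → Fin k, D.TauGood r S c τ cτ ∧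
    x = (({v ∈ D.VtSet r τ.node | v ∉ (⋃ i, τ.U i) ∧
      HappyOn G (D.VtSet r τ.node) cτ v}.ncard : ℕ) : EReal)}


section Aux

variable {T : Type*} {TG : SimpleGraph T}

lemma treeDesc_refl (TG : SimpleGraph T) (r t : T) : TreeDesc TG r t t :=
  fun p => p.end_mem_support

lemma treeDesc_iff_mem_path (ht : TG.IsTree) {r b : T} (p : TG.Walk r b) (hp : p.IsPath)
    (a : T) : TreeDesc TG r a b ↔ a ∈ p.support := by
  classical
  constructor
  · exact fun h => h p
  · intro ha w
    have hb : w.bypass = p := (ht.existsUnique_path r b).unique w.bypass_isPath hp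
    exact w.support_bypass_subset (hb ▸ ha)

lemma not_treeDesc_symm (ht : TG.IsTree) {r a b : T} (hab : TreeDesc TG r a b)
    (hne : a ≠ b) : ¬ TreeDesc TG r b a := by
  classical
  intro hba
  obtain ⟨p, hp, -⟩ := ht.existsUnique_path r b
  have haP : a ∈ p.support := hab p
  have hbQ : b ∈ (p.takeUntil a haP).support := hba (p.takeUntil a haP)
  have hnd := hp.support_nodup
  rw [← p.take_spec haP, SimpleGraph.Walk.support_append] at hnd
  have hbtail : b ∈ (p.dropUntil a haP).support.tail := by
    have hmem := (p.dropUntil a haP).end_mem_support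
    rw [SimpleGraph.Walk.support_eq_cons] at hmem
    rcases List.mem_cons.mp hmem with h | h
    · exact absurd h.symm hne
    · exact h
  exact (List.nodup_append'.mp hnd).2.2 hbQ hbtail

lemma mem_support_of_desc {r tc s t'' : T} (hs : TreeDesc TG r tc s)
    (ht'' : ¬ TreeDesc TG r tc t'') (w : TG.Walk s t'') : tc ∈ w.support := by
  unfold TreeDesc at ht''
  push_neg at ht''
  obtain ⟨p, hp⟩ := ht''
  have hmem := hs (p.append w.reverse)
  rw [SimpleGraph.Walk.mem_support_append_iff] at hmem
  rcases hmem with h | h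
  · exact absurd h hp
  · rwa [SimpleGraph.Walk.support_reverse, List.mem_reverse] at h

lemma exists_child_in_path (ht : TG.IsTree) {r t t' : T}
    (p1 : TG.Walk r t) (q : TG.Walk t t') (hp : (p1.append q).IsPath) (hne : t' ≠ t) :
    ∃ s, TG.Adj t s ∧ TreeDesc TG r t s ∧ s ∈ q.support := by
  cases q with
  | nil => exact absurd rfl hne
  | @cons _ s _ hadj q' =>
    have hp1 : p1.IsPath := hp.of_append_left
    have hnd := hp.support_nodup
    rw [SimpleGraph.Walk.support_append] at hnd
    have hsq : s ∈ (SimpleGraph.Walk.cons hadj q').support.tail := by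
      simpa [SimpleGraph.Walk.support_cons] using q'.start_mem_support
    have hs_not : s ∉ p1.support := fun hmem => (List.nodup_append'.mp hnd).2.2 hmem hsq
    have hpath2 : (SimpleGraph.Walk.cons hadj.symm p1.reverse).IsPath := by
      rw [SimpleGraph.Walk.cons_isPath_iff]
      refine ⟨hp1.reverse, ?_⟩
      rwa [SimpleGraph.Walk.support_reverse, List.mem_reverse]
    refine ⟨s, hadj, ?_, ?_⟩
    · rw [treeDesc_iff_mem_path ht _ hpath2.reverse]
      rw [SimpleGraph.Walk.support_reverse, List.mem_reverse,
        SimpleGraph.Walk.support_cons]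
      refine List.mem_cons_of_mem _ ?_
      rw [SimpleGraph.Walk.support_reverse, List.mem_reverse]
      exact p1.end_mem_support
    · rw [SimpleGraph.Walk.support_cons]
      exact List.mem_cons_of_mem _ q'.start_mem_support

lemma desc_introduce_iff (ht : TG.IsTree) {r t tc : T} (hchild : TreeChild TG r t tc)
    (huniq : ∀ s, TreeChild TG r t s → s = tc) (t' : T) :
    TreeDesc TG r t t' ↔ t' = t ∨ TreeDesc TG r tc t' := by
  classical
  constructor
  · intro h
    by_cases he : t' = t
    · exact Or.inl he
    · right
      obtain ⟨p, hp, -⟩ := ht.existsUnique_path r t'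
      have hTp : t ∈ p.support := h p
      obtain ⟨s, hadj, hdesc, hsq⟩ := exists_child_in_path ht (p.takeUntil t hTp)
        (p.dropUntil t hTp) (by rwa [p.take_spec hTp]) he
      have hs : s = tc := huniq s ⟨hadj, hdesc⟩
      rw [treeDesc_iff_mem_path ht p hp, ← hs]
      exact p.support_dropUntil_subset hTp hsq
  · rintro (rfl | h)
    · exact treeDesc_refl _ _ _
    · intro w
      have htc := h w
      exact w.support_takeUntil_subset htc (hchild.2 (w.takeUntil tc htc))

lemma induce_connected_walk {s : Set T} (h : (TG.induce s).Connected) {a b : T}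
    (ha : a ∈ s) (hb : b ∈ s) : ∃ w : TG.Walk a b, ∀ x ∈ w.support, x ∈ s := by
  obtain ⟨q⟩ := h.preconnected ⟨a, ha⟩ ⟨b, hb⟩
  refine ⟨q.map (SimpleGraph.Embedding.induce s).toHom, fun x hx => ?_⟩
  erw [SimpleGraph.Walk.support_map, List.mem_map] at hx
  obtain ⟨y, -, rfl⟩ := hx
  exact y.2

end Aux

lemma piVal_eq_bot_of_no_good {k : ℕ} (D : TreeDecomp G TG) (r : T) (S : Set V)
    (c : V → Fin k) (τ : MHVTuple V T k) (h : ∀ cτ, ¬ D.TauGood r S c τ cτ) :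
    D.PiVal r S c τ = ⊥ := by
  have he : {x : EReal | ∃ cτ : V → Fin k, D.TauGood r S c τ cτ ∧
      x = (({v ∈ D.VtSet r τ.node | v ∉ (⋃ i, τ.U i) ∧
        HappyOn G (D.VtSet r τ.node) cτ v}.ncard : ℕ) : EReal)} = ∅ := by
    ext x
    simp only [Set.mem_setOf_eq, Set.mem_empty_iff_false, iff_false, not_exists]
    rintro cτ ⟨hg, -⟩
    exact h cτ hg
  rw [TreeDecomp.PiVal, he, sSup_empty]

lemma ereal_natCast_succ (n : ℕ) : ((n + 1 : ℕ) : EReal) = 1 + (n : EReal) := by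
  rw [← EReal.coe_coe_eq_natCast, ← EReal.coe_coe_eq_natCast, Nat.cast_add, Nat.cast_one,
    EReal.coe_add, EReal.coe_one, add_comm]

/-- introduce node recurrence: with introduced vertex `vt` of
colour `i = c'(vt)`, (1) if `vt ∈ H_i` and some neighbour of `vt` in `G_t` has a
colour different from `i` then `Π(τ) = −∞`; (2) if some vertex of some `H_j`
(`j ≠ i`) is a neighbour of `vt` in `G_t` then `Π(τ) = −∞`; (3) otherwise
`Π(τ) = 1 + Π(τ̄)` if `vt ∈ H_i` and `Π(τ) = Π(τ̄)` if `vt ∈ U_i`, where `τ̄` is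
obtained by moving to the child and removing `vt` from `H_i` and `U_i`
(in `EReal`, `1 + ⊥ = ⊥`). -/
theorem piVal_introduce_node {V T : Type*} [Fintype V] [Fintype T]
    (G : SimpleGraph V) (TG : SimpleGraph T) (D : TreeDecomp G TG)
    (k : ℕ) (hk : 1 ≤ k) (S : Set V) (c : V → Fin k)
    (r : T) (hnice : D.IsNice r) (t tc : T) (vt : V)
    (hintro : D.IsIntroduceAt r t tc vt)
    (col : V → Fin k) (H U : Fin k → Set V)
    (hvalid : D.ValidTuple S c ⟨t, col, H, U⟩) :
    ((vt ∈ H (col vt) ∧ ∃ n ∈ D.VtSet r t, G.Adj vt n ∧ col n ≠ col vt) →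
        D.PiVal r S c ⟨t, col, H, U⟩ = ⊥) ∧
    ((∃ j, j ≠ col vt ∧ ∃ u ∈ H j, u ∈ D.VtSet r t ∧ G.Adj vt u) →
        D.PiVal r S c ⟨t, col, H, U⟩ = ⊥) ∧
    (¬(vt ∈ H (col vt) ∧ ∃ n ∈ D.VtSet r t, G.Adj vt n ∧ col n ≠ col vt) →
      ¬(∃ j, j ≠ col vt ∧ ∃ u ∈ H j, u ∈ D.VtSet r t ∧ G.Adj vt u) →
      (vt ∈ H (col vt) →
          D.PiVal r S c ⟨t, col, H, U⟩ =
            1 + D.PiVal r S c ⟨tc, col, fun j => H j \ {vt}, fun j => U j \ {vt}⟩) ∧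
      (vt ∈ U (col vt) →
          D.PiVal r S c ⟨t, col, H, U⟩ =
            D.PiVal r S c ⟨tc, col, fun j => H j \ {vt}, fun j => U j \ {vt}⟩)) := by
  classical
  obtain ⟨hchild, huniq, hvtc, hbagt⟩ := hintro
  obtain ⟨hval1, hval2, hval3⟩ := hvalid
  have hval1' : ∀ v ∈ S ∩ D.bag t, col v = c v := hval1
  have hval2' : ∀ i : Fin k, H i ∪ U i = {v ∈ D.bag t | col v = i} := hval2
  have hval3' : ∀ i : Fin k, H i ∩ U i = ∅ := hval3
  have ht := D.isTree
  have hvt_bag : vt ∈ D.bag t := by rw [hbagt]; exact Set.mem_insert _ _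
  have hvtA : vt ∈ D.VtSet r t := Set.mem_union_left _ hvt_bag
  have hbag_sub : D.bag tc ⊆ D.bag t := by rw [hbagt]; exact Set.subset_insert _ _
  have hdesc_iff := fun t' => desc_introduce_iff ht hchild huniq t'
  -- vt appears in no bag below tc
  have hNotVtBelow : ∀ t', TreeDesc TG r tc t' → vt ∉ D.bag t' := by
    intro t' h hmem
    have hnd : ¬ TreeDesc TG r tc t := not_treeDesc_symm ht hchild.2 hchild.1.ne
    obtain ⟨w, hw⟩ := induce_connected_walk (D.bags_connected vt) hmem hvt_bag
    exact hvtc (hw tc (mem_support_of_desc h hnd w))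
  have hvtB : vt ∉ D.VtSet r tc := by
    rintro (h | ⟨t', hd, hmem⟩)
    · exact hvtc h
    · exact hNotVtBelow t' hd hmem
  -- neighbours of vt inside the child part are in the child bag
  have hnbr : ∀ u, u ∈ D.VtSet r tc → G.Adj vt u → u ∈ D.bag tc := by
    intro u hu hadj
    obtain ⟨s, hs, hus⟩ : ∃ s, TreeDesc TG r tc s ∧ u ∈ D.bag s := by
      rcases hu with h | ⟨s, hdesc, hmem⟩
      · exact ⟨tc, treeDesc_refl _ _ _, h⟩
      · exact ⟨s, hdesc, hmem⟩
    obtain ⟨t'', hvt'', hut''⟩ := D.bags_cover_edges hadj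
    have hntd : ¬ TreeDesc TG r tc t'' := fun hh => hNotVtBelow t'' hh hvt''
    obtain ⟨w, hw⟩ := induce_connected_walk (D.bags_connected u) hus hut''
    exact hw tc (mem_support_of_desc hs hntd w)
  -- decomposition of the vertex set
  have hVt : D.VtSet r t = insert vt (D.VtSet r tc) := by
    ext v
    constructor
    · rintro (h | ⟨t', hd, hmem⟩)
      · rw [hbagt] at h
        rcases h with h | h
        · exact Or.inl h
        · exact Or.inr (Set.mem_union_left _ h)
      · rcases (hdesc_iff t').mp hd with rfl | hd'
        · rw [hbagt] at hmem
          rcases hmem with h | h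
          · exact Or.inl h
          · exact Or.inr (Set.mem_union_left _ h)
        · exact Or.inr (Set.mem_union_right _ ⟨t', hd', hmem⟩)
    · rintro (rfl | h)
      · exact hvtA
      · rcases h with h | ⟨t', hd, hmem⟩
        · exact Set.mem_union_left _ (hbag_sub h)
        · exact Set.mem_union_right _ ⟨t', (hdesc_iff t').mpr (Or.inr hd), hmem⟩
  have hBsubA : D.VtSet r tc ⊆ D.VtSet r t := by
    rw [hVt]; exact Set.subset_insert _ _
  have hmemB : ∀ v, v ∈ D.VtSet r t → v ≠ vt → v ∈ D.VtSet r tc := by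
    intro v hv hne
    rw [hVt] at hv
    rcases hv with h | h
    · exact absurd h hne
    · exact h
  have hbagtc_mem : ∀ v, v ∈ D.bag t → v ≠ vt → v ∈ D.bag tc := by
    intro v hv hne
    rw [hbagt] at hv
    rcases hv with h | h
    · exact absurd h hne
    · exact h
  -- facts from validity
  have hHmem : ∀ j v, v ∈ H j → v ∈ D.bag t ∧ col v = j := by
    intro j v hv
    have h : v ∈ {v ∈ D.bag t | col v = j} := by
      rw [← hval2' j]; exact Set.mem_union_left _ hv
    exact h
  have hUmem : ∀ j v, v ∈ U j → v ∈ D.bag t ∧ col v = j := by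
    intro j v hv
    have h : v ∈ {v ∈ D.bag t | col v = j} := by
      rw [← hval2' j]; exact Set.mem_union_right _ hv
    exact h
  have hBagHU : ∀ v ∈ D.bag t, v ∈ H (col v) ∨ v ∈ U (col v) := by
    intro v hv
    have h : v ∈ H (col v) ∪ U (col v) := by
      rw [hval2' (col v)]; exact Set.mem_sep hv rfl
    exact h
  have hdisjHU : ∀ j v, v ∈ H j → v ∉ U j := by
    intro j v hH hU
    have h : v ∈ H j ∩ U j := ⟨hH, hU⟩
    rw [hval3' j] at h
    exact h
  refine ⟨?_, ?_, ?_⟩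
  · -- Part (1)
    rintro ⟨hvH, n, hnA, hadj, hne⟩
    apply piVal_eq_bot_of_no_good
    rintro cτ ⟨hg1, hg2, hg3⟩
    have hg1' : ∀ v ∈ D.bag t, cτ v = col v := hg1
    have hg3' : ∀ i : Fin k, ∀ v ∈ H i, HappyOn G (D.VtSet r t) cτ v := hg3
    have hnvt : n ≠ vt := hadj.ne'
    have hnt : n ∈ D.bag t := hbag_sub (hnbr n (hmemB n hnA hnvt) hadj)
    have h1 := hg3' (col vt) vt hvH n hnA hadj
    rw [hg1' n hnt, hg1' vt hvt_bag] at h1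
    exact hne h1
  · -- Part (2)
    rintro ⟨j, hji, u, huH, huA, hadj⟩
    apply piVal_eq_bot_of_no_good
    rintro cτ ⟨hg1, hg2, hg3⟩
    have hg1' : ∀ v ∈ D.bag t, cτ v = col v := hg1
    have hg3' : ∀ i : Fin k, ∀ v ∈ H i, HappyOn G (D.VtSet r t) cτ v := hg3
    obtain ⟨hubag, hucol⟩ := hHmem j u huH
    have h1 := hg3' j u huH vt hvtA hadj.symm
    rw [hg1' u hubag, hg1' vt hvt_bag, hucol] at h1
    exact hji h1.symm
  · -- Part (3)
    intro hno1' hno2'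
    have hno1 : vt ∈ H (col vt) → ∀ n ∈ D.VtSet r t, G.Adj vt n → col n = col vt := by
      intro hvH n hn hadj
      by_contra hne
      exact hno1' ⟨hvH, n, hn, hadj, hne⟩
    have hno2 : ∀ j u, u ∈ H j → u ∈ D.VtSet r t → G.Adj vt u → j = col vt := by
      intro j u hu hA hadj
      by_contra hne
      exact hno2' ⟨j, hne, u, hu, hA, hadj⟩
    set W1 : (V → Fin k) → Set V := fun cτ =>
      {v ∈ D.VtSet r t | v ∉ (⋃ i, U i) ∧ HappyOn G (D.VtSet r t) cτ v} with hW1def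
    set W2 : (V → Fin k) → Set V := fun cτ =>
      {v ∈ D.VtSet r tc | v ∉ (⋃ i, U i \ {vt}) ∧
        HappyOn G (D.VtSet r tc) cτ v} with hW2def
    set τ1 : MHVTuple V T k := ⟨t, col, H, U⟩ with hτ1
    set τ2 : MHVTuple V T k := ⟨tc, col, fun j => H j \ {vt}, fun j => U j \ {vt}⟩ with hτ2
    set S1b : Set EReal :=
      {x | ∃ cτ : V → Fin k, D.TauGood r S c τ1 cτ ∧ x = ((W1 cτ).ncard : EReal)} with hS1b
    set S2b : Set EReal :=
      {x | ∃ cτ : V → Fin k, D.TauGood r S c τ2 cτ ∧ x = ((W2 cτ).ncard : EReal)} with hS2b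
    have hPi1 : D.PiVal r S c τ1 = sSup S1b := rfl
    have hPi2 : D.PiVal r S c τ2 = sSup S2b := rfl
    -- forward transfer of goodness
    have hgoodF : ∀ cτ, D.TauGood r S c τ1 cτ → D.TauGood r S c τ2 cτ := by
      rintro cτ ⟨hg1, hg2, hg3⟩
      have hg1' : ∀ v ∈ D.bag t, cτ v = col v := hg1
      have hg2' : ∀ v ∈ S ∩ D.VtSet r t, cτ v = c v := hg2
      have hg3' : ∀ i : Fin k, ∀ v ∈ H i, HappyOn G (D.VtSet r t) cτ v := hg3
      refine ⟨fun v hv => hg1' v (hbag_sub hv), fun v hv => hg2' v ⟨hv.1, hBsubA hv.2⟩,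
        fun j v hv u hu hadj => hg3' j v hv.1 u (hBsubA hu) hadj⟩
    -- forward count bound
    have hsubF : ∀ cτ, W1 cτ ⊆ insert vt (W2 cτ) := by
      rintro cτ v ⟨hvA, hvU, hvhap⟩
      by_cases hveq : v = vt
      · exact Or.inl hveq
      · refine Set.mem_insert_of_mem _ ⟨hmemB v hvA hveq, ?_, ?_⟩
        · intro hmem
          obtain ⟨j, hj⟩ := Set.mem_iUnion.mp hmem
          exact hvU (Set.mem_iUnion.mpr ⟨j, hj.1⟩)
        · intro u hu hadj
          exact hvhap u (hBsubA hu) hadj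
    -- backward transfer
    have hback : ∀ cτ', D.TauGood r S c τ2 cτ' →
        D.TauGood r S c τ1 (Function.update cτ' vt (col vt)) ∧
        (vt ∈ H (col vt) →
          W1 (Function.update cτ' vt (col vt)) = insert vt (W2 cτ')) ∧
        (vt ∈ U (col vt) → W1 (Function.update cτ' vt (col vt)) = W2 cτ') := by
      rintro cτ' ⟨hg1, hg2, hg3⟩
      have hg1' : ∀ v ∈ D.bag tc, cτ' v = col v := hg1
      have hg2' : ∀ v ∈ S ∩ D.VtSet r tc, cτ' v = c v := hg2
      have hg3' : ∀ j : Fin k, ∀ v ∈ H j \ {vt}, HappyOn G (D.VtSet r tc) cτ' v := hg3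
      set cτ : V → Fin k := Function.update cτ' vt (col vt) with hcτ
      have hcvt : cτ vt = col vt := Function.update_self _ _ _
      have hcB : ∀ v, v ≠ vt → cτ v = cτ' v := fun v hv => Function.update_of_ne hv _ _
      have hgood : D.TauGood r S c τ1 cτ := by
        refine ⟨?_, ?_, ?_⟩
        · intro v hv
          show cτ v = col v
          by_cases hveq : v = vt
          · rw [hveq]; exact hcvt
          · rw [hcB v hveq]
            exact hg1' v (hbagtc_mem v hv hveq)
        · intro v hv
          by_cases hveq : v = vt
          · rw [hveq] at hv ⊢
            rw [hcvt]
            exact hval1' vt ⟨hv.1, hvt_bag⟩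
          · rw [hcB v hveq]
            exact hg2' v ⟨hv.1, hmemB v hv.2 hveq⟩
        · intro j v hv u hu hadj
          show cτ u = cτ v
          by_cases hveq : v = vt
          · rw [hveq] at hv hadj ⊢
            have hj : col vt = j := (hHmem j vt hv).2
            have hvH : vt ∈ H (col vt) := hj ▸ hv
            have hunvt : u ≠ vt := hadj.ne'
            have huB : u ∈ D.VtSet r tc := hmemB u hu hunvt
            rw [hcB u hunvt, hg1' u (hnbr u huB hadj), hcvt]
            exact hno1 hvH u hu hadj
          · obtain ⟨hvbag, hvcol⟩ := hHmem j v hv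
            have hvtc' : v ∈ D.bag tc := hbagtc_mem v hvbag hveq
            by_cases hueq : u = vt
            · rw [hueq] at hadj ⊢
              rw [hcvt, hcB v hveq, hg1' v hvtc']
              have hji : j = col vt := hno2 j v hv (Set.mem_union_left _ hvbag) hadj.symm
              rw [hvcol, hji]
            · rw [hcB u hueq, hcB v hveq]
              exact hg3' j v ⟨hv, hveq⟩ u (hmemB u hu hueq) hadj
      -- W2 elements become W1 elements
      have hsubB : ∀ v ∈ W2 cτ', v ∈ W1 cτ := by
        rintro v ⟨hvB, hvU, hvhap⟩
        have hvne : v ≠ vt := fun h => hvtB (h ▸ hvB)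
        refine ⟨hBsubA hvB, ?_, ?_⟩
        · intro hmem
          obtain ⟨j, hj⟩ := Set.mem_iUnion.mp hmem
          exact hvU (Set.mem_iUnion.mpr ⟨j, hj, hvne⟩)
        · intro u hu hadj
          by_cases hueq : u = vt
          · rw [hueq] at hadj ⊢
            have hvbagtc : v ∈ D.bag tc := hnbr v hvB hadj.symm
            have hvbag : v ∈ D.bag t := hbag_sub hvbagtc
            have hvH : v ∈ H (col v) := by
              rcases hBagHU v hvbag with h | h
              · exact h
              · exact (hvU (Set.mem_iUnion.mpr ⟨col v, h, hvne⟩)).elim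
            have hcol : col v = col vt :=
              hno2 (col v) v hvH (Set.mem_union_left _ hvbag) hadj.symm
            rw [hcvt, hcB v hvne, hg1' v hvbagtc, hcol]
          · rw [hcB u hueq, hcB v hvne]
            exact hvhap u (hmemB u hu hueq) hadj
      -- W1 (upd) is contained in insert vt (W2 cτ')
      have hsub1 : W1 cτ ⊆ insert vt (W2 cτ') := by
        rintro v ⟨hvA, hvU, hvhap⟩
        by_cases hveq : v = vt
        · exact Or.inl hveq
        · refine Set.mem_insert_of_mem _ ⟨hmemB v hvA hveq, ?_, ?_⟩
          · intro hmem
            obtain ⟨j, hj⟩ := Set.mem_iUnion.mp hmem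
            exact hvU (Set.mem_iUnion.mpr ⟨j, hj.1⟩)
          · intro u hu hadj
            have hune : u ≠ vt := fun h => hvtB (h ▸ hu)
            rw [← hcB u hune, ← hcB v hveq]
            exact hvhap u (hBsubA hu) hadj
      refine ⟨hgood, ?_, ?_⟩
      · intro hvH
        apply Set.Subset.antisymm hsub1
        rintro v (hveq | hv)
        · rw [hveq]
          refine ⟨hvtA, ?_, ?_⟩
          · intro hmem
            obtain ⟨j, hj⟩ := Set.mem_iUnion.mp hmem
            have hcol : col vt = j := (hUmem j vt hj).2
            exact hdisjHU (col vt) vt hvH (hcol ▸ hj)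
          · intro u hu hadj
            have hune : u ≠ vt := hadj.ne'
            have huB : u ∈ D.VtSet r tc := hmemB u hu hune
            rw [hcB u hune, hg1' u (hnbr u huB hadj), hcvt]
            exact hno1 hvH u hu hadj
        · exact hsubB v hv
      · intro hvU'
        apply Set.Subset.antisymm
        · intro v hv
          have hvne : v ≠ vt := by
            rintro rfl
            exact hv.2.1 (Set.mem_iUnion.mpr ⟨col v, hvU'⟩)
          rcases hsub1 hv with h | h
          · exact absurd h hvne
          · exact h
        · exact hsubB
    -- finiteness of the value sets
    have hbound : ∀ s : Set V, s.ncard ≤ Fintype.card V := by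
      intro s
      have := Set.ncard_le_ncard (Set.subset_univ s) Set.finite_univ
      rwa [Set.ncard_univ, Nat.card_eq_fintype_card] at this
    have hfin2 : S2b.Finite := by
      apply Set.Finite.subset ((Set.finite_Iic (Fintype.card V)).image fun n : ℕ => (n : EReal))
      rintro x ⟨cτ, -, rfl⟩
      exact ⟨(W2 cτ).ncard, hbound _, rfl⟩
    constructor
    · -- vt ∈ H i : Π(τ) = 1 + Π(τ̄)
      intro hvH
      rw [hPi1, hPi2]
      apply le_antisymm
      · apply sSup_le
        rintro x ⟨cτ, hg, rfl⟩
        have hle : (W1 cτ).ncard ≤ (W2 cτ).ncard + 1 :=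
          le_trans (Set.ncard_le_ncard (hsubF cτ) (Set.toFinite _)) (Set.ncard_insert_le _ _)
        calc ((W1 cτ).ncard : EReal) ≤ (((W2 cτ).ncard + 1 : ℕ) : EReal) :=
              EReal.natCast_le_iff.mpr hle
          _ = 1 + ((W2 cτ).ncard : EReal) := ereal_natCast_succ _
          _ ≤ 1 + sSup S2b := add_le_add_right (le_sSup (show ((W2 cτ).ncard : EReal) ∈ S2b from ⟨cτ, hgoodF cτ hg, rfl⟩)) 1
      · rcases Set.eq_empty_or_nonempty S2b with hS2 | hS2
        · rw [hS2, sSup_empty, EReal.add_bot]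
          exact bot_le
        · obtain ⟨cτ', hg', hx⟩ := hS2.csSup_mem hfin2
          obtain ⟨hgB, hWH, -⟩ := hback cτ' hg'
          have hn : (W1 (Function.update cτ' vt (col vt))).ncard = (W2 cτ').ncard + 1 := by
            rw [hWH hvH]
            exact Set.ncard_insert_of_notMem (fun h => hvtB h.1) (Set.toFinite _)
          calc 1 + sSup S2b = 1 + ((W2 cτ').ncard : EReal) := by rw [hx]
            _ = (((W2 cτ').ncard + 1 : ℕ) : EReal) := (ereal_natCast_succ _).symm
            _ = ((W1 (Function.update cτ' vt (col vt))).ncard : EReal) := by rw [hn]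
            _ ≤ sSup S1b := le_sSup (show ((W1 (Function.update cτ' vt (col vt))).ncard : EReal) ∈ S1b from ⟨_, hgB, rfl⟩)
    · -- vt ∈ U i : Π(τ) = Π(τ̄)
      intro hvU'
      rw [hPi1, hPi2]
      apply le_antisymm
      · apply sSup_le
        rintro x ⟨cτ, hg, rfl⟩
        have hsub : W1 cτ ⊆ W2 cτ := by
          intro v hv
          have hvne : v ≠ vt := by
            rintro rfl
            exact hv.2.1 (Set.mem_iUnion.mpr ⟨col v, hvU'⟩)
          rcases hsubF cτ hv with h | h
          · exact absurd h hvne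
          · exact h
        have hle : (W1 cτ).ncard ≤ (W2 cτ).ncard :=
          Set.ncard_le_ncard hsub (Set.toFinite _)
        exact le_trans (EReal.natCast_le_iff.mpr hle) (le_sSup (show ((W2 cτ).ncard : EReal) ∈ S2b from ⟨cτ, hgoodF cτ hg, rfl⟩))
      · rcases Set.eq_empty_or_nonempty S2b with hS2 | hS2
        · rw [hS2, sSup_empty]
          exact bot_le
        · obtain ⟨cτ', hg', hx⟩ := hS2.csSup_mem hfin2
          obtain ⟨hgB, -, hWU⟩ := hback cτ' hg'
          calc sSup S2b = ((W2 cτ').ncard : EReal) := hx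
            _ = ((W1 (Function.update cτ' vt (col vt))).ncard : EReal) := by rw [hWU hvU']
            _ ≤ sSup S1b := le_sSup (show ((W1 (Function.update cτ' vt (col vt))).ncard : EReal) ∈ S1b from ⟨_, hgB, rfl⟩)
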